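/- Let $G$ be a finite complex reflection group acting on $V=\mathbb{C}^n$ with degrees $d_1 \geq \dots \geq d_n$, and let $g \in G$ be a $\zeta$-regular element for $\zeta$ a root of unity. Then the $n$ eigenvalues of $g$ are $\zeta^{1-d_\alpha}$ for $1 \leq \alpha \leq n$; in particular $\zeta^{d_\alpha} = 1$ for some $\alpha$. -/

import Mathlib

open MvPolynomial Matrix

noncomputable section

variable {n : ℕ}

/-- Pullback of polynomials along the linear map with matrix `M`:
`(pback M F)(v) = F (M *ᵥ v)`.  The pullback `g^*F` of the paper is `pback (g⁻¹).val F`. -/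
def pback (M : Matrix (Fin n) (Fin n) ℂ) :
    MvPolynomial (Fin n) ℂ →ₐ[ℂ] MvPolynomial (Fin n) ℂ :=
  aeval fun i => ∑ j, C (M i j) * X j

/-- Multi-index partial derivative `∂^a/∂z^a` of a polynomial (in the standard coordinates). -/
def mderiv (a : Fin n → ℕ) (F : MvPolynomial (Fin n) ℂ) : MvPolynomial (Fin n) ℂ :=
  (List.finRange n).foldr (fun i acc => (fun p => pderiv i p)^[a i] acc) F

/-- The linear coordinate `z^α = ∑_j P_{α j} u^j` of the coordinate system given by `P`. -/
def coordPoly (P : GL (Fin n) ℂ) (α : Fin n) : MvPolynomial (Fin n) ℂ :=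
  ∑ j, C (P.val α j) * X j

/-- `∂^a F/∂z^a` evaluated at `q`, where `z = P u` are the coordinates given by `P`. -/
def zderivAt (P : GL (Fin n) ℂ) (a : Fin n → ℕ) (F : MvPolynomial (Fin n) ℂ)
    (q : Fin n → ℂ) : ℂ :=
  eval (P.val *ᵥ q) (mderiv a (pback (P⁻¹).val F))

/-- `g` is a (complex) reflection: it fixes a hyperplane pointwise and is not the identity. -/
def IsReflection (g : GL (Fin n) ℂ) : Prop :=
  g ≠ 1 ∧
    Module.finrank ℂ (LinearMap.range (Matrix.toLin' (g.val - 1))) = 1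

/-- A finite complex reflection group: a finite subgroup generated by its reflections. -/
def IsReflectionGroup (G : Subgroup (GL (Fin n) ℂ)) : Prop :=
  Finite G ∧ Subgroup.closure {g | g ∈ G ∧ IsReflection g} = G

/-- A regular vector: it lies on no reflection hyperplane of `G`. -/
def IsRegularVec (G : Subgroup (GL (Fin n) ℂ)) (q : Fin n → ℂ) : Prop :=
  q ≠ 0 ∧ ∀ g ∈ G, IsReflection g → g.val *ᵥ q ≠ q

/-- A `ζ`-regular element of `G`: its `ζ`-eigenspace contains a regular vector. -/
def IsZetaRegular (G : Subgroup (GL (Fin n) ℂ)) (g : GL (Fin n) ℂ) (ζ : ℂ) : Prop :=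
  g ∈ G ∧ ∃ q, IsRegularVec G q ∧ g.val *ᵥ q = ζ • q

/-- A set of basic invariants of `G` with degrees `d`. -/
structure BasicInvariants (G : Subgroup (GL (Fin n) ℂ)) (d : Fin n → ℕ)
    (x : Fin n → MvPolynomial (Fin n) ℂ) : Prop where
  pos : ∀ α, 0 < d α
  homog : ∀ α, (x α).IsHomogeneous (d α)
  invariant : ∀ g ∈ G, ∀ α, pback (g : GL (Fin n) ℂ).val (x α) = x α
  indep : AlgebraicIndependent ℂ x
  gen : ∀ F : MvPolynomial (Fin n) ℂ, (∀ g ∈ G, pback (g : GL (Fin n) ℂ).val F = F) →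
    F ∈ Algebra.adjoin ℂ (Set.range x)

/-- An admissible triplet `(g, ζ, q)`; the degrees are arranged so that `d 0` is the highest. -/
structure AdmissibleTriplet [NeZero n] (G : Subgroup (GL (Fin n) ℂ)) (d : Fin n → ℕ)
    (g : GL (Fin n) ℂ) (ζ : ℂ) (q : Fin n → ℂ) : Prop where
  prim : IsPrimitiveRoot ζ (d 0)
  reg : IsZetaRegular G g ζ
  regq : IsRegularVec G q
  eig : g.val *ᵥ q = ζ • q

/-- `P` gives a `(g,ζ)`-graded coordinate system: `g^* z^α = ζ^{d_α-1} z^α`. -/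
def GradedCoords (g : GL (Fin n) ℂ) (ζ : ℂ) (d : Fin n → ℕ) (P : GL (Fin n) ℂ) : Prop :=
  ∀ α, pback (g⁻¹).val (coordPoly P α) = C (ζ ^ ((d α : ℤ) - 1)) * coordPoly P α

/-- The multi-index `e_β`. -/
def unitIdx (β : Fin n) : Fin n → ℕ := fun j => if j = β then 1 else 0

/-- `x` is compatible with the coordinate system given by `P` at `q`:
`∂x^α/∂z^β (q) = δ^α_β`. -/
def Compatible (P : GL (Fin n) ℂ) (q : Fin n → ℂ)
    (x : Fin n → MvPolynomial (Fin n) ℂ) : Prop :=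
  ∀ α β, zderivAt P (unitIdx β) (x α) q = if α = β then 1 else 0

/-- `x` is good: the derivatives `∂^a x^α/∂z^a` vanish at `q` for every `a ∈ I_α^{(0)}`. -/
def IsGood [NeZero n] (P : GL (Fin n) ℂ) (q : Fin n → ℂ) (d : Fin n → ℕ)
    (x : Fin n → MvPolynomial (Fin n) ℂ) : Prop :=
  ∀ α (a : Fin n → ℕ), (∑ β, a β * d β) = d α → 2 ≤ ∑ β, a β →
    zderivAt P a (x α) q = 0

/-- Multi-index partial derivative of a function on `ℂ^n`. -/
def mpd (a : Fin n → ℕ) (f : (Fin n → ℂ) → ℂ) : (Fin n → ℂ) → ℂ :=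
  (List.finRange n).foldr
    (fun i acc => (fun g v => fderiv ℂ g v (Pi.single i 1))^[a i] acc) f

/-- `f` is a rational function which is regular at `q`. -/
def RegRat (q : Fin n → ℂ) (f : (Fin n → ℂ) → ℂ) : Prop :=
  ∃ p s : MvPolynomial (Fin n) ℂ, eval q s ≠ 0 ∧
    ∀ v, eval v s ≠ 0 → f v = eval v p / eval v s

/-- Condition `P(i)`: the value at `q` is diagonal and nonvanishing derivatives at `q`
satisfy `a·d + d_β = d_γ + k d_1` with `k ≥ i`. -/
def CondP [NeZero n] (d : Fin n → ℕ) (q : Fin n → ℂ) (i : ℕ)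
    (M : Fin n → Fin n → (Fin n → ℂ) → ℂ) : Prop :=
  (∀ γ β, γ ≠ β → M γ β q = 0) ∧
    ∀ γ β (a : Fin n → ℕ), a ≠ 0 → mpd a (M γ β) q ≠ 0 →
      ∃ k : ℕ, i ≤ k ∧ (∑ α, a α * d α) + d β = d γ + k * d 0

/-- Condition `Q(j,h)`: nonvanishing derivatives at `q` satisfy
`a·d + h + d_β = d_γ + k d_1` with `k ≥ j`. -/
def CondQ [NeZero n] (d : Fin n → ℕ) (q : Fin n → ℂ) (j h : ℕ)
    (M : Fin n → Fin n → (Fin n → ℂ) → ℂ) : Prop :=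
  ∀ γ β (a : Fin n → ℕ), mpd a (M γ β) q ≠ 0 →
    ∃ k : ℕ, j ≤ k ∧ (∑ α, a α * d α) + h + d β = d γ + k * d 0

/-- Entrywise product of matrices of functions. -/
def matMulF (Xm Ym : Fin n → Fin n → (Fin n → ℂ) → ℂ) :
    Fin n → Fin n → (Fin n → ℂ) → ℂ :=
  fun γ β v => ∑ ρ, Xm γ ρ v * Ym ρ β v

/-- The `(γ,β)` entry of the Jacobian matrix `J = (∂x^γ/∂z^β)`, expressed in the
coordinates `z = P u`, as a function on coordinate space. -/
def jacEntry (P : GL (Fin n) ℂ) (x : Fin n → MvPolynomial (Fin n) ℂ) (γ β : Fin n) :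
    (Fin n → ℂ) → ℂ :=
  fun v => eval v (pderiv β (pback (P⁻¹).val (x γ)))

section Springer

variable {n : ℕ}

lemma pback_C (M : Matrix (Fin n) (Fin n) ℂ) (a : ℂ) : pback M (C a) = C a := by
  simp [pback]

lemma pback_X' (M : Matrix (Fin n) (Fin n) ℂ) (i : Fin n) :
    pback M (X i) = ∑ j, C (M i j) * X j := aeval_X _ i

lemma eval_pback (M : Matrix (Fin n) (Fin n) ℂ) (F : MvPolynomial (Fin n) ℂ) (v : Fin n → ℂ) :
    eval v (pback M F) = eval (M *ᵥ v) F := by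
  have h : (eval v).comp ((pback M : MvPolynomial (Fin n) ℂ →ₐ[ℂ] MvPolynomial (Fin n) ℂ) :
      MvPolynomial (Fin n) ℂ →+* MvPolynomial (Fin n) ℂ) = eval (M *ᵥ v) := by
    apply MvPolynomial.ringHom_ext
    · intro a; simp [pback]
    · intro i; simp [pback, Matrix.mulVec, dotProduct, map_sum]
  exact RingHom.congr_fun h F

lemma pback_pback (M N : Matrix (Fin n) (Fin n) ℂ) (F : MvPolynomial (Fin n) ℂ) :
    pback M (pback N F) = pback (N * M) F := by
  have h : (pback M).comp (pback N) = pback (N * M) := by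
    apply MvPolynomial.algHom_ext
    intro i
    show pback M (pback N (X i)) = pback (N * M) (X i)
    rw [pback_X' N i, pback_X' (N * M) i, map_sum]
    simp only [_root_.map_mul, pback_C, pback_X', Finset.mul_sum, Matrix.mul_apply]
    rw [Finset.sum_comm]
    apply Finset.sum_congr rfl
    intro k _
    rw [show (C (∑ j, N i j * M j k) : MvPolynomial (Fin n) ℂ) * X k
          = ∑ j, C (N i j * M j k) * X k by
        rw [map_sum (C : ℂ →+* MvPolynomial (Fin n) ℂ), Finset.sum_mul]]
    apply Finset.sum_congr rfl
    intro j _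
    rw [C_mul, mul_assoc]
  exact AlgHom.congr_fun h F

lemma pderiv_pback_X (M : Matrix (Fin n) (Fin n) ℂ) (i j : Fin n) :
    pderiv j (pback M (X i)) = C (M i j) := by
  rw [pback_X', map_sum]
  rw [Finset.sum_eq_single j]
  · simp
  · intro k _ hk
    simp [pderiv_C_mul, pderiv_X_of_ne hk]
  · simp

lemma pderiv_pback (M : Matrix (Fin n) (Fin n) ℂ) (j : Fin n) (F : MvPolynomial (Fin n) ℂ) :
    pderiv j (pback M F) = ∑ i, C (M i j) * pback M (pderiv i F) := by
  induction F using MvPolynomial.induction_on with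
  | C a => simp [pback_C]
  | add p q hp hq =>
      simp only [map_add, hp, hq, mul_add, Finset.sum_add_distrib]
  | mul_X p i hp =>
      have hX : ∀ i' : Fin n, pderiv i' (X i : MvPolynomial (Fin n) ℂ)
          = if i = i' then 1 else 0 := by
        intro i'
        by_cases h : i = i'
        · subst h; simp
        · simp [pderiv_X_of_ne h, h]
      rw [_root_.map_mul, pderiv_mul, hp, pderiv_pback_X]
      have : ∀ i' : Fin n, pderiv i' (p * X i) = pderiv i' p * X i + p * (if i = i' then 1 else 0) := by
        intro i'; rw [pderiv_mul, hX]
      simp only [this, map_add, _root_.map_mul, mul_add, Finset.sum_add_distrib]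
      congr 1
      · rw [Finset.sum_mul, pback_X']
        congr 1; ext i'
        rw [mul_assoc]
      · rw [Finset.sum_eq_single i]
        · simp [mul_comm]
        · intro k _ hk
          simp [Ne.symm hk, pback_C]
        · simp
      
end Springer

section Springer2

variable {n : ℕ}

lemma degree_add' (a b : Fin n →₀ ℕ) : (a + b).degree = a.degree + b.degree := by
  simp only [Finsupp.degree_eq_weight_one, map_add]

lemma eval_smul_of_isHomogeneous {F : MvPolynomial (Fin n) ℂ} {e : ℕ}
    (hF : F.IsHomogeneous e) (c : ℂ) (z : Fin n → ℂ) :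
    eval (c • z) F = c ^ e * eval z F := by
  conv_lhs => rw [← support_sum_monomial_coeff F]
  conv_rhs => rw [← support_sum_monomial_coeff F]
  rw [map_sum, map_sum, Finset.mul_sum]
  apply Finset.sum_congr rfl
  intro d hd
  rw [eval_monomial, eval_monomial]
  have hdeg : d.degree = e := by
    rw [Finsupp.degree_eq_weight_one]
    exact hF (mem_support_iff.mp hd)
  have h1 : (d.prod fun i k => (c • z) i ^ k) = (d.prod fun i k => c ^ k) * d.prod fun i k => z i ^ k := by
    rw [← Finsupp.prod_mul]
    apply Finsupp.prod_congr
    intro i _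
    rw [Pi.smul_apply, smul_eq_mul, mul_pow]
  have h2 : (d.prod fun i k => c ^ k) = c ^ e := by
    rw [Finsupp.prod, Finset.prod_pow_eq_pow_sum, ← hdeg]
    rfl
  rw [h1, h2]; ring

lemma isHomogeneous_pderiv {F : MvPolynomial (Fin n) ℂ} {e : ℕ}
    (hF : F.IsHomogeneous e) (j : Fin n) :
    (pderiv j F).IsHomogeneous (e - 1) := by
  rw [← support_sum_monomial_coeff F, map_sum]
  rw [← mem_homogeneousSubmodule]
  apply Submodule.sum_mem
  intro d hd
  have hdeg : d.degree = e := by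
    rw [Finsupp.degree_eq_weight_one]
    exact hF (mem_support_iff.mp hd)
  rw [mem_homogeneousSubmodule, pderiv_monomial]
  by_cases hj : d j = 0
  · simp only [hj, Nat.cast_zero, mul_zero, map_zero]
    exact isHomogeneous_zero _ _ _
  · apply isHomogeneous_monomial
    have hle : Finsupp.single j 1 ≤ d := by
      rw [Finsupp.single_le_iff]; omega
    have : (d - Finsupp.single j 1) + Finsupp.single j 1 = d := tsub_add_cancel_of_le hle
    have hds : (d - Finsupp.single j 1).degree + (Finsupp.single j 1).degree = e := by
      rw [← degree_add', this, hdeg]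
    have hsing : (Finsupp.single j 1 : Fin n →₀ ℕ).degree = 1 := by
      exact Finsupp.degree_single j 1
    omega

lemma homogeneousComponent_mul (p q : MvPolynomial (Fin n) ℂ) (k : ℕ) :
    homogeneousComponent k (p * q)
      = ∑ ab ∈ Finset.HasAntidiagonal.antidiagonal k, homogeneousComponent ab.1 p * homogeneousComponent ab.2 q := by
  classical
  apply MvPolynomial.ext
  intro d
  rw [coeff_homogeneousComponent, coeff_sum]
  simp_rw [coeff_mul, coeff_homogeneousComponent]
  rw [Finset.sum_comm]
  have hterm : ∀ x ∈ Finset.HasAntidiagonal.antidiagonal d,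
      (∑ ab ∈ Finset.HasAntidiagonal.antidiagonal k,
        (if x.1.degree = ab.1 then coeff x.1 p else 0) *
        (if x.2.degree = ab.2 then coeff x.2 q else 0))
      = if d.degree = k then coeff x.1 p * coeff x.2 q else 0 := by
    intro x hx
    have hxd : x.1 + x.2 = d := Finset.HasAntidiagonal.mem_antidiagonal.mp hx
    have hdeg : x.1.degree + x.2.degree = d.degree := by rw [← degree_add', hxd]
    by_cases hk : d.degree = k
    · rw [if_pos hk]
      rw [Finset.sum_eq_single (x.1.degree, x.2.degree)]
      · simp
      · intro ab hab hne
        by_cases h1 : x.1.degree = ab.1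
        · have h2 : x.2.degree ≠ ab.2 := by
            intro h2; apply hne; rw [Prod.ext_iff]; exact ⟨h1.symm, h2.symm⟩
          rw [if_neg h2, mul_zero]
        · rw [if_neg h1, zero_mul]
      · intro habs
        exfalso; apply habs
        rw [Finset.HasAntidiagonal.mem_antidiagonal, hdeg, hk]
    · rw [if_neg hk]
      apply Finset.sum_eq_zero
      intro ab hab
      have habk : ab.1 + ab.2 = k := Finset.HasAntidiagonal.mem_antidiagonal.mp hab
      by_cases h1 : x.1.degree = ab.1
      · have h2 : x.2.degree ≠ ab.2 := by
          intro h2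
          apply hk; rw [← hdeg, h1, h2, habk]
        rw [if_neg h2, mul_zero]
      · rw [if_neg h1, zero_mul]
  rw [Finset.sum_congr rfl hterm]
  by_cases hk : d.degree = k <;> simp [hk]

/-- divisors of nonzero homogeneous polynomials are homogeneous -/
lemma homogeneous_of_dvd_homogeneous {p c f : MvPolynomial (Fin n) ℂ} {m : ℕ}
    (hpc : p * c = f) (hf0 : f ≠ 0) (hfh : f.IsHomogeneous m) :
    ∃ a b, a + b = m ∧ p.IsHomogeneous a ∧ c.IsHomogeneous b := by
  classical
  have hp0 : p ≠ 0 := by rintro rfl; rw [zero_mul] at hpc; exact hf0 hpc.symm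
  have hc0 : c ≠ 0 := by rintro rfl; rw [mul_zero] at hpc; exact hf0 hpc.symm
  set Sp := (Finset.range (p.totalDegree + 1)).filter (fun a => homogeneousComponent a p ≠ 0) with hSp
  set Sc := (Finset.range (c.totalDegree + 1)).filter (fun a => homogeneousComponent a c ≠ 0) with hSc
  have hzp : ∀ a, a ∉ Sp → homogeneousComponent a p = 0 := by
    intro a ha
    by_cases h : a < p.totalDegree + 1
    · by_contra hne
      exact ha (Finset.mem_filter.mpr ⟨Finset.mem_range.mpr h, hne⟩)
    · have hlt : p.totalDegree < a := by omega
      exact homogeneousComponent_eq_zero _ _ hlt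
  have hzc : ∀ a, a ∉ Sc → homogeneousComponent a c = 0 := by
    intro a ha
    by_cases h : a < c.totalDegree + 1
    · by_contra hne
      exact ha (Finset.mem_filter.mpr ⟨Finset.mem_range.mpr h, hne⟩)
    · have hlt : c.totalDegree < a := by omega
      exact homogeneousComponent_eq_zero _ _ hlt
  have hSpne : Sp.Nonempty := by
    by_contra h
    rw [Finset.not_nonempty_iff_eq_empty] at h
    apply hp0
    conv_lhs => rw [← sum_homogeneousComponent p]
    apply Finset.sum_eq_zero
    intro a _
    apply hzp
    rw [h]; exact Finset.notMem_empty a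
  have hScne : Sc.Nonempty := by
    by_contra h
    rw [Finset.not_nonempty_iff_eq_empty] at h
    apply hc0
    conv_lhs => rw [← sum_homogeneousComponent c]
    apply Finset.sum_eq_zero
    intro a _
    apply hzc
    rw [h]; exact Finset.notMem_empty a
  have hkey : ∀ (ap bp : ℕ), ap ∈ Sp → bp ∈ Sc →
      (∀ a' ∈ Sp, ∀ b' ∈ Sc, a' + b' = ap + bp → (a' = ap ∧ b' = bp)) →
      ap + bp = m := by
    intro ap bp hap hbp huniq
    have hcomp : homogeneousComponent (ap + bp) f
        = homogeneousComponent ap p * homogeneousComponent bp c := by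
      rw [← hpc, homogeneousComponent_mul]
      rw [Finset.sum_eq_single (ap, bp)]
      · intro ab hab hne
        have habk : ab.1 + ab.2 = ap + bp := Finset.HasAntidiagonal.mem_antidiagonal.mp hab
        by_cases h1 : ab.1 ∈ Sp
        · by_cases h2 : ab.2 ∈ Sc
          · exfalso
            obtain ⟨e1, e2⟩ := huniq ab.1 h1 ab.2 h2 habk
            exact hne (Prod.ext e1 e2)
          · rw [hzc ab.2 h2, mul_zero]
        · rw [hzp ab.1 h1, zero_mul]
      · intro habs
        exfalso; exact habs (Finset.HasAntidiagonal.mem_antidiagonal.mpr rfl)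
    have hne : homogeneousComponent (ap + bp) f ≠ 0 := by
      rw [hcomp]
      exact mul_ne_zero (Finset.mem_filter.mp hap).2 (Finset.mem_filter.mp hbp).2
    by_contra hconte
    apply hne
    apply homogeneousComponent_eq_zero'
    intro d hd
    have := hfh (mem_support_iff.mp hd)
    rw [Finsupp.degree_eq_weight_one]
    rw [show (Finsupp.weight fun _ => (1:ℕ)) d = m from this]
    exact fun h => hconte h.symm
  have hmin : Sp.min' hSpne + Sc.min' hScne = m := by
    apply hkey _ _ (Sp.min'_mem hSpne) (Sc.min'_mem hScne)
    intro a' ha' b' hb' hsum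
    have h1 := Sp.min'_le a' ha'
    have h2 := Sc.min'_le b' hb'
    omega
  have hmax : Sp.max' hSpne + Sc.max' hScne = m := by
    apply hkey _ _ (Sp.max'_mem hSpne) (Sc.max'_mem hScne)
    intro a' ha' b' hb' hsum
    have h1 := Sp.le_max' a' ha'
    have h2 := Sc.le_max' b' hb'
    have h3 := Sp.min'_le a' ha'
    have h4 := Sc.min'_le b' hb'
    have h5 := Sp.min'_le _ (Sp.max'_mem hSpne)
    have h6 := Sc.min'_le _ (Sc.max'_mem hScne)
    omega
  have hpsing : ∀ a' ∈ Sp, a' = Sp.min' hSpne := by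
    intro a' ha'
    have h1 := Sp.min'_le a' ha'
    have h2 := Sp.le_max' a' ha'
    have h5 := Sc.min'_le _ (Sc.max'_mem hScne)
    have h6 := Sc.le_max' _ (Sc.min'_mem hScne)
    omega
  have hcsing : ∀ b' ∈ Sc, b' = Sc.min' hScne := by
    intro b' hb'
    have h1 := Sc.min'_le b' hb'
    have h2 := Sc.le_max' b' hb'
    have h5 := Sp.min'_le _ (Sp.max'_mem hSpne)
    have h6 := Sp.le_max' _ (Sp.min'_mem hSpne)
    omega
  refine ⟨Sp.min' hSpne, Sc.min' hScne, hmin, ?_, ?_⟩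
  · have : p = homogeneousComponent (Sp.min' hSpne) p := by
      conv_lhs => rw [← sum_homogeneousComponent p]
      rw [Finset.sum_eq_single (Sp.min' hSpne)]
      · intro a _ hne
        apply hzp
        intro haSp
        exact hne (hpsing a haSp)
      · intro h
        exfalso
        have := Finset.mem_filter.mp (Sp.min'_mem hSpne)
        exact h this.1
    rw [this]
    exact homogeneousComponent_isHomogeneous _ _
  · have : c = homogeneousComponent (Sc.min' hScne) c := by
      conv_lhs => rw [← sum_homogeneousComponent c]
      rw [Finset.sum_eq_single (Sc.min' hScne)]
      · intro a _ hne
        apply hzc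
        intro haSc
        exact hne (hcsing a haSc)
      · intro h
        exfalso
        have := Finset.mem_filter.mp (Sc.min'_mem hScne)
        exact h this.1
    rw [this]
    exact homogeneousComponent_isHomogeneous _ _

lemma eq_C_of_isHomogeneous_zero {p : MvPolynomial (Fin n) ℂ}
    (hp : p.IsHomogeneous 0) : p = C (coeff 0 p) := by
  have h0 : p.totalDegree = 0 := (totalDegree_zero_iff_isHomogeneous _).mpr hp
  conv_lhs => rw [← sum_homogeneousComponent p]
  rw [h0, Finset.sum_range_one, homogeneousComponent_zero]

end Springer2

section Springer3

variable {n : ℕ}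

/-- directional derivative of `F` at `w` in direction `u` -/
def dirDeriv (w u : Fin n → ℂ) (F : MvPolynomial (Fin n) ℂ) : ℂ :=
  ∑ j, u j * eval w (pderiv j F)

lemma dirDeriv_C (w u : Fin n → ℂ) (a : ℂ) : dirDeriv w u (C a) = 0 := by
  simp [dirDeriv]

lemma dirDeriv_add (w u : Fin n → ℂ) (F G : MvPolynomial (Fin n) ℂ) :
    dirDeriv w u (F + G) = dirDeriv w u F + dirDeriv w u G := by
  simp only [dirDeriv, map_add, mul_add, Finset.sum_add_distrib]

lemma dirDeriv_mul (w u : Fin n → ℂ) (F G : MvPolynomial (Fin n) ℂ) :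
    dirDeriv w u (F * G) = eval w F * dirDeriv w u G + eval w G * dirDeriv w u F := by
  simp only [dirDeriv, pderiv_mul, map_add, _root_.map_mul, Finset.mul_sum]
  rw [← Finset.sum_add_distrib]
  apply Finset.sum_congr rfl
  intros; ring

lemma dirDeriv_sum (w u : Fin n → ℂ) {ι : Type*} (s : Finset ι) (f : ι → MvPolynomial (Fin n) ℂ) :
    dirDeriv w u (∑ i ∈ s, f i) = ∑ i ∈ s, dirDeriv w u (f i) := by
  classical
  induction s using Finset.induction_on with
  | empty => simp [dirDeriv]
  | insert _ _ hx ih =>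
      rw [Finset.sum_insert hx, Finset.sum_insert hx, dirDeriv_add, ih]

lemma dirDeriv_pback (M : Matrix (Fin n) (Fin n) ℂ) (v u : Fin n → ℂ)
    (F : MvPolynomial (Fin n) ℂ) :
    dirDeriv v u (pback M F) = dirDeriv (M *ᵥ v) (M *ᵥ u) F := by
  simp only [dirDeriv, pderiv_pback, map_sum, _root_.map_mul, eval_C, eval_pback, Finset.mul_sum]
  rw [Finset.sum_comm]
  apply Finset.sum_congr rfl
  intro i _
  rw [Matrix.mulVec, dotProduct, Finset.sum_mul]
  apply Finset.sum_congr rfl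
  intro j _
  ring

lemma dirDeriv_adjoin (w u : Fin n → ℂ) (x : Fin n → MvPolynomial (Fin n) ℂ)
    (hxv : ∀ α, dirDeriv w u (x α) = 0) {F : MvPolynomial (Fin n) ℂ}
    (hF : F ∈ Algebra.adjoin ℂ (Set.range x)) : dirDeriv w u F = 0 := by
  induction hF using Algebra.adjoin_induction with
  | mem y hy =>
      obtain ⟨α, rfl⟩ := hy
      exact hxv α
  | algebraMap r => exact dirDeriv_C w u r
  | add a b ha hb iha ihb => rw [dirDeriv_add, iha, ihb, add_zero]
  | mul a b ha hb iha ihb => rw [dirDeriv_mul, iha, ihb, mul_zero, mul_zero, add_zero]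

/-- Lemma A: at a point with trivial stabilizer the gradients of the basic invariants
span everything (formulated as a contradiction). -/
lemma free_point_lemma [NeZero n] (G : Subgroup (GL (Fin n) ℂ)) [Fintype ↥G]
    (d : Fin n → ℕ) (x : Fin n → MvPolynomial (Fin n) ℂ) (hx : BasicInvariants G d x)
    (v : Fin n → ℂ) (hfree : ∀ h : ↥G, h ≠ 1 → (h : GL (Fin n) ℂ).val *ᵥ v ≠ v)
    (u : Fin n → ℂ) (hu : u ≠ 0) (horth : ∀ α, dirDeriv v u (x α) = 0) : False := by
  classical
  obtain ⟨j₀, hj₀⟩ := Function.ne_iff.mp hu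
  have hdiff : ∀ h : ↥G, h ≠ 1 → ∃ j, ((h : GL (Fin n) ℂ).val *ᵥ v) j ≠ v j := by
    intro h hne
    by_contra hc; push_neg at hc
    exact hfree h hne (funext hc)
  let jdx : ↥G → Fin n := fun h => if hne : h ≠ 1 then (hdiff h hne).choose else 0
  let zz : ↥G → (Fin n → ℂ) := fun h => (h : GL (Fin n) ℂ).val *ᵥ v
  let μ : ↥G → MvPolynomial (Fin n) ℂ := fun h => X (jdx h) - C (zz h (jdx h))
  have hμz : ∀ h : ↥G, eval (zz h) (μ h) = 0 := by
    intro h; simp [μ]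
  have hμv : ∀ h : ↥G, h ≠ 1 → eval v (μ h) ≠ 0 := by
    intro h hne
    have hch : zz h (jdx h) ≠ v (jdx h) := by
      simp only [jdx, dif_pos hne]
      exact (hdiff h hne).choose_spec
    simp only [μ, map_sub, eval_X, eval_C, sub_ne_zero]
    exact fun hc => hch hc.symm
  let T : Finset ↥G := Finset.univ.erase 1
  let ℓ : MvPolynomial (Fin n) ℂ := X j₀ - C (v j₀)
  let P : MvPolynomial (Fin n) ℂ := ℓ * ∏ h ∈ T, (μ h) ^ 2
  let F : MvPolynomial (Fin n) ℂ := ∑ h : ↥G, pback (h : GL (Fin n) ℂ).val P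
  -- invariance of F
  have hinv : ∀ g ∈ G, pback (g : GL (Fin n) ℂ).val F = F := by
    intro g hg
    set g' : ↥G := ⟨g, hg⟩
    show pback (g' : GL (Fin n) ℂ).val F = F
    rw [map_sum]
    simp only [pback_pback]
    have : ∀ h : ↥G, ((h : GL (Fin n) ℂ).val * (g' : GL (Fin n) ℂ).val)
        = ((h * g' : ↥G) : GL (Fin n) ℂ).val := by
      intro h; rfl
    simp only [this]
    exact Fintype.sum_bijective (fun h : ↥G => h * g') (Group.mulRight_bijective g')
      (fun h => pback (((h * g' : ↥G) : GL (Fin n) ℂ)).val P)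
      (fun h => pback ((h : GL (Fin n) ℂ)).val P) (fun h => rfl)
  have hFadj := hx.gen F hinv
  have hzero : dirDeriv v u F = 0 := dirDeriv_adjoin v u x horth hFadj
  -- compute dirDeriv v u F directly
  have hterm : ∀ h : ↥G, dirDeriv v u (pback (h : GL (Fin n) ℂ).val P)
      = dirDeriv (zz h) ((h : GL (Fin n) ℂ).val *ᵥ u) P := by
    intro h; exact dirDeriv_pback _ v u P
  -- vanishing at h ≠ 1
  have hvanish : ∀ h : ↥G, h ≠ 1 → ∀ w : Fin n → ℂ, dirDeriv (zz h) w P = 0 := by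
    intro h hne w
    have hhT : h ∈ T := Finset.mem_erase.mpr ⟨hne, Finset.mem_univ h⟩
    have hP : P = (μ h) ^ 2 * (ℓ * ∏ h' ∈ T.erase h, (μ h') ^ 2) := by
      show ℓ * ∏ h' ∈ T, (μ h') ^ 2 = _
      rw [← Finset.mul_prod_erase T _ hhT, mul_left_comm]
    have hpd : ∀ j, eval (zz h) (pderiv j P) = 0 := by
      intro j
      rw [hP, pderiv_mul, pderiv_pow]
      simp [map_add, _root_.map_mul, map_pow, hμz h]
    simp only [dirDeriv]
    apply Finset.sum_eq_zero
    intro j _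
    rw [hpd j, mul_zero]
  -- the identity term
  have hℓv : eval v ℓ = 0 := by simp [ℓ]
  have hddℓ : dirDeriv v u ℓ = u j₀ := by
    simp only [dirDeriv, ℓ, map_sub, pderiv_X]
    rw [Finset.sum_eq_single j₀]
    · simp
    · intro k _ hk
      simp [Pi.single_apply, hk, pderiv_C]
    · simp
  have hddP : dirDeriv v u P ≠ 0 := by
    have : dirDeriv v u P = eval v (∏ h ∈ T, (μ h) ^ 2) * u j₀ := by
      show dirDeriv v u (ℓ * _) = _
      rw [dirDeriv_mul, hℓv, zero_mul, zero_add, hddℓ]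
    rw [this]
    apply mul_ne_zero _ hj₀
    rw [map_prod]
    apply Finset.prod_ne_zero_iff.mpr
    intro h hh
    rw [map_pow]
    exact pow_ne_zero _ (hμv h (Finset.mem_erase.mp hh).1)
  -- combine
  have hone : ((1 : ↥G) : GL (Fin n) ℂ).val = (1 : Matrix (Fin n) (Fin n) ℂ) := rfl
  have hsum : dirDeriv v u F = dirDeriv v u P := by
    show dirDeriv v u (∑ h : ↥G, pback (h : GL (Fin n) ℂ).val P) = _
    rw [dirDeriv_sum]
    rw [Fintype.sum_eq_single (1 : ↥G)
      (fun h hne => by rw [hterm]; exact hvanish h hne _)]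
    rw [hterm, hone]
    simp only [Matrix.one_mulVec, zz, hone]
  rw [hsum] at hzero
  exact hddP hzero

end Springer3

section Springer4

variable {n : ℕ}

/-- The Jacobian determinant of the basic invariants. -/
def jacPoly (x : Fin n → MvPolynomial (Fin n) ℂ) : MvPolynomial (Fin n) ℂ :=
  (Matrix.of fun α j => pderiv j (x α)).det

lemma eval_jacPoly (x : Fin n → MvPolynomial (Fin n) ℂ) (z : Fin n → ℂ) :
    eval z (jacPoly x) = (Matrix.of fun α j => eval z (pderiv j (x α))).det := by
  rw [jacPoly, RingHom.map_det]
  rfl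

def rowPoly (M : Matrix (Fin n) (Fin n) ℂ) (i : Fin n) : MvPolynomial (Fin n) ℂ :=
  ∑ j, C (M i j) * X j

lemma eval_rowPoly (M : Matrix (Fin n) (Fin n) ℂ) (i : Fin n) (z : Fin n → ℂ) :
    eval z (rowPoly M i) = (M *ᵥ z) i := by
  simp [rowPoly, Matrix.mulVec, dotProduct, map_sum]

lemma rowPoly_isHomogeneous (M : Matrix (Fin n) (Fin n) ℂ) (i : Fin n) :
    (rowPoly M i).IsHomogeneous 1 := by
  rw [rowPoly, ← mem_homogeneousSubmodule]
  apply Submodule.sum_mem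
  intro j _
  rw [mem_homogeneousSubmodule]
  exact isHomogeneous_C_mul_X _ _

lemma coeff_rowPoly (M : Matrix (Fin n) (Fin n) ℂ) (i j : Fin n) :
    coeff (Finsupp.single j 1) (rowPoly M i) = M i j := by
  classical
  rw [rowPoly, MvPolynomial.coeff_sum]
  rw [Finset.sum_eq_single j]
  · rw [coeff_C_mul, MvPolynomial.coeff_X' j, if_pos rfl, mul_one]
  · intro k _ hk
    rw [coeff_C_mul, MvPolynomial.coeff_X' k,
      if_neg (fun hc => hk (Finsupp.single_left_injective one_ne_zero hc).symm.symm), mul_zero]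
    -- note: condition is `single k 1 = single j 1`
  · simp

lemma matrix_sub_one_ne_zero {G : Subgroup (GL (Fin n) ℂ)} {h : ↥G} (hne : h ≠ 1) :
    ((h : GL (Fin n) ℂ) : Matrix (Fin n) (Fin n) ℂ) - 1 ≠ 0 := by
  intro hc
  rw [sub_eq_zero] at hc
  apply hne
  have : (h : GL (Fin n) ℂ) = 1 := Units.ext hc
  exact_mod_cast OneMemClass.coe_eq_one.mp this

lemma exists_fix_of_jac_eval_zero [NeZero n] (G : Subgroup (GL (Fin n) ℂ)) [Fintype ↥G]
    (d : Fin n → ℕ) (x : Fin n → MvPolynomial (Fin n) ℂ) (hx : BasicInvariants G d x)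
    (z : Fin n → ℂ) (hz : eval z (jacPoly x) = 0) :
    ∃ h : ↥G, h ≠ 1 ∧ (h : GL (Fin n) ℂ).val *ᵥ z = z := by
  by_contra hc
  push_neg at hc
  rw [eval_jacPoly] at hz
  obtain ⟨u, hu, hAu⟩ := (Matrix.exists_mulVec_eq_zero_iff).mpr hz
  apply free_point_lemma G d x hx z hc u hu
  intro α
  have h1 := congrFun hAu α
  simpa [Matrix.mulVec, dotProduct, dirDeriv, mul_comm] using h1

/-- Steinberg's theorem: the Jacobian does not vanish at a regular vector. -/
lemma jac_ne_zero_at_regular [NeZero n] (G : Subgroup (GL (Fin n) ℂ)) [Fintype ↥G]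
    (d : Fin n → ℕ) (x : Fin n → MvPolynomial (Fin n) ℂ) (hx : BasicInvariants G d x)
    (q : Fin n → ℂ) (hq : IsRegularVec G q) :
    eval q (jacPoly x) ≠ 0 := by
  classical
  intro hq0
  -- Step 1: jacPoly x ≠ 0, via a free vector
  have hrow_ne : ∀ h : ↥G, h ≠ 1 → ∃ i, rowPoly ((h : GL (Fin n) ℂ).val - 1) i ≠ 0 := by
    intro h hne
    have hM := matrix_sub_one_ne_zero hne
    have : ∃ i j, (((h : GL (Fin n) ℂ) : Matrix (Fin n) (Fin n) ℂ) - 1) i j ≠ 0 := by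
      by_contra hcc; push_neg at hcc
      apply hM
      ext i j; exact hcc i j
    obtain ⟨i, j, hij⟩ := this
    refine ⟨i, fun hc0 => hij ?_⟩
    have hcr := coeff_rowPoly ((h : GL (Fin n) ℂ).val - 1) i j
    rw [hc0, coeff_zero] at hcr
    exact hcr.symm
  let T : Finset ↥G := Finset.univ.erase 1
  let rp : ↥G → MvPolynomial (Fin n) ℂ := fun h =>
    if hne : h ≠ 1 then rowPoly ((h : GL (Fin n) ℂ).val - 1) (hrow_ne h hne).choose else 1
  have hrp_ne : ∀ h : ↥G, rp h ≠ 0 := by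
    intro h
    by_cases hne : h ≠ 1
    · simp only [rp, dif_pos hne]
      exact (hrow_ne h hne).choose_spec
    · simp only [rp, dif_neg hne]
      exact one_ne_zero
  have hJne : jacPoly x ≠ 0 := by
    intro hJ0
    have hΦ : (∏ h ∈ T, rp h) ≠ 0 := Finset.prod_ne_zero_iff.mpr (fun h _ => hrp_ne h)
    have : ∃ z : Fin n → ℂ, eval z (∏ h ∈ T, rp h) ≠ 0 := by
      by_contra hcc; push_neg at hcc
      exact hΦ (MvPolynomial.funext (fun z => by rw [hcc z, map_zero]))
    obtain ⟨z, hzΦ⟩ := this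
    have hzfree : ∀ h : ↥G, h ≠ 1 → (h : GL (Fin n) ℂ).val *ᵥ z ≠ z := by
      intro h hne hfix
      apply hzΦ
      rw [map_prod]
      apply Finset.prod_eq_zero (Finset.mem_erase.mpr ⟨hne, Finset.mem_univ h⟩)
      simp only [rp, dif_pos hne]
      rw [eval_rowPoly, Matrix.sub_mulVec, Matrix.one_mulVec, hfix]
      simp
    obtain ⟨h, hne, hfix⟩ := exists_fix_of_jac_eval_zero G d x hx z (by rw [hJ0, map_zero])
    exact hzfree h hne hfix
  -- Step 2: extract a prime factor of jacPoly vanishing at q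
  have hassoc := UniqueFactorizationMonoid.factors_prod hJne
  obtain ⟨w, hw⟩ := hassoc
  have hevalJ : eval q ((UniqueFactorizationMonoid.factors (jacPoly x)).prod * ↑w) = 0 := by
    rw [hw]; exact hq0
  rw [_root_.map_mul] at hevalJ
  have hwu : IsUnit (eval q (↑w : MvPolynomial (Fin n) ℂ)) := w.isUnit.map (eval q)
  have hfprod : eval q (UniqueFactorizationMonoid.factors (jacPoly x)).prod = 0 := by
    rcases mul_eq_zero.mp hevalJ with h | h
    · exact h
    · exact absurd h hwu.ne_zero
  rw [← Multiset.prod_hom _ (eval q)] at hfprod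
  rw [Multiset.prod_eq_zero_iff] at hfprod
  obtain ⟨p, hpfac, hpq⟩ := Multiset.mem_map.mp hfprod
  have hp : Prime p := UniqueFactorizationMonoid.prime_of_factor p hpfac
  have hpJ : p ∣ jacPoly x := UniqueFactorizationMonoid.dvd_of_mem_factors hpfac
  -- Step 3: zero locus of p consists of non-free points
  have hkey : ∀ z : Fin n → ℂ, eval z p = 0 →
      ∃ h : ↥G, h ≠ 1 ∧ (h : GL (Fin n) ℂ).val *ᵥ z = z := by
    intro z hzp
    apply exists_fix_of_jac_eval_zero G d x hx
    obtain ⟨t, ht⟩ := hpJ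
    rw [ht, _root_.map_mul, hzp, zero_mul]
  -- Step 4: ideal argument
  let P : Ideal (MvPolynomial (Fin n) ℂ) := Ideal.span {p}
  have hPprime : P.IsPrime := (Ideal.span_singleton_prime hp.ne_zero).mpr hp
  let I : ↥G → Ideal (MvPolynomial (Fin n) ℂ) := fun h =>
    Ideal.span (Set.range (fun i => rowPoly ((h : GL (Fin n) ℂ).val - 1) i))
  have hprodle : (∏ h ∈ T, I h) ≤ P := by
    have hvan : (∏ h ∈ T, I h) ≤ MvPolynomial.vanishingIdeal ℂ (MvPolynomial.zeroLocus ℂ P) := by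
      intro f hf
      rw [MvPolynomial.mem_vanishingIdeal_iff]
      intro z hzP
      have hzp : eval z p = 0 :=
        (MvPolynomial.mem_zeroLocus_iff.mp hzP) p (Ideal.mem_span_singleton_self p)
      obtain ⟨h, hne, hfix⟩ := hkey z hzp
      have hfh : f ∈ I h := by
        have hle : (∏ h' ∈ T, I h') ≤ I h :=
          le_trans Ideal.prod_le_inf (Finset.inf_le (Finset.mem_erase.mpr ⟨hne, Finset.mem_univ h⟩))
        exact hle hf
      have : I h ≤ RingHom.ker (eval z) := by
        rw [Ideal.span_le]
        rintro _ ⟨i, rfl⟩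
        rw [SetLike.mem_coe, RingHom.mem_ker, eval_rowPoly, Matrix.sub_mulVec,
          Matrix.one_mulVec, hfix]
        simp
      exact this hfh
    have hrad : MvPolynomial.vanishingIdeal ℂ (MvPolynomial.zeroLocus ℂ P) = P := by
      rw [MvPolynomial.vanishingIdeal_zeroLocus_eq_radical, hPprime.radical]
    rw [hrad] at hvan
    exact hvan
  obtain ⟨h, hhT, hIle⟩ := hPprime.prod_le.mp hprodle
  have hne : h ≠ 1 := (Finset.mem_erase.mp hhT).1
  -- Step 5: the rows are multiples of p
  have hdvd : ∀ i, p ∣ rowPoly ((h : GL (Fin n) ℂ).val - 1) i := by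
    intro i
    rw [← Ideal.mem_span_singleton]
    exact hIle (Ideal.subset_span ⟨i, rfl⟩)
  choose cc hcc using fun i => (hdvd i)
  -- h fixes q
  have hfixq : (h : GL (Fin n) ℂ).val *ᵥ q = q := by
    have : ∀ i, ((((h : GL (Fin n) ℂ)).val - 1) *ᵥ q) i = 0 := by
      intro i
      rw [← eval_rowPoly, hcc i, _root_.map_mul, hpq, zero_mul]
    funext i
    have h2 := this i
    rw [Matrix.sub_mulVec, Matrix.one_mulVec] at h2
    have := sub_eq_zero.mp h2
    exact this
  -- Step 6: h is a reflection: the matrix h - 1 is a rank one outer product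
  have hCc : ∀ i, cc i = C (coeff 0 (cc i)) := by
    intro i
    by_cases hri : rowPoly ((h : GL (Fin n) ℂ).val - 1) i = 0
    · have : p * cc i = 0 := by rw [← hcc i, hri]
      have hcz : cc i = 0 := by
        rcases mul_eq_zero.mp this with hh | hh
        · exact absurd hh hp.ne_zero
        · exact hh
      rw [hcz]; simp
    · obtain ⟨a, b, hab, hpa, hcb⟩ := homogeneous_of_dvd_homogeneous
        (hcc i).symm hri (rowPoly_isHomogeneous _ i)
      have ha1 : a = 1 := by
        rcases Nat.lt_or_ge a 1 with hlt | hge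
        · interval_cases a
          · exfalso
            have := eq_C_of_isHomogeneous_zero hpa
            have hr0 : coeff 0 p ≠ 0 := by
              intro hc0
              apply hp.ne_zero
              rw [this, hc0, map_zero]
            apply hp.not_unit
            rw [this]
            exact IsUnit.of_mul_eq_one (C (coeff 0 p)⁻¹)
              (by rw [← C_mul, mul_inv_cancel₀ hr0, C_1])
        · omega
      have hb0 : b = 0 := by omega
      rw [hb0] at hcb
      exact eq_C_of_isHomogeneous_zero hcb
  set w : Fin n → ℂ := fun j => coeff (Finsupp.single j 1) p with hwdef
  set γ : Fin n → ℂ := fun i => coeff 0 (cc i) with hγdef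
  have houter : ∀ i j, (((h : GL (Fin n) ℂ)).val - 1) i j = γ i * w j := by
    intro i j
    have hcr := coeff_rowPoly ((h : GL (Fin n) ℂ).val - 1) i j
    rw [hcc i, hCc i, mul_comm p _, coeff_C_mul] at hcr
    exact hcr.symm
  -- some entry nonzero
  have hMex : ∃ i j, (((h : GL (Fin n) ℂ)).val - 1) i j ≠ 0 := by
    by_contra hcc2; push_neg at hcc2
    apply matrix_sub_one_ne_zero hne
    ext i j; exact hcc2 i j
  obtain ⟨i₁, j₁, hij₁⟩ := hMex
  have hγne : γ i₁ ≠ 0 := by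
    intro hcz; apply hij₁; rw [houter, hcz, zero_mul]
  have hwne : w j₁ ≠ 0 := by
    intro hcz; apply hij₁; rw [houter, hcz, mul_zero]
  -- rank one
  have hmulVec : ∀ z : Fin n → ℂ,
      (((h : GL (Fin n) ℂ)).val - 1) *ᵥ z = (∑ j, w j * z j) • γ := by
    intro z
    funext i
    simp only [Matrix.mulVec, dotProduct, houter, Pi.smul_apply, smul_eq_mul,
      Finset.sum_mul, Finset.mul_sum]
    apply Finset.sum_congr rfl
    intros; ring
  have hrefl : IsReflection (h : GL (Fin n) ℂ) := by
    constructor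
    · intro hc
      exact hne (by exact_mod_cast OneMemClass.coe_eq_one.mp hc)
    · have hrange : LinearMap.range (Matrix.toLin' (((h : GL (Fin n) ℂ)).val - 1))
          = Submodule.span ℂ {γ} := by
        apply le_antisymm
        · rintro y ⟨z, rfl⟩
          rw [Matrix.toLin'_apply, hmulVec]
          exact Submodule.smul_mem _ _ (Submodule.mem_span_singleton_self γ)
        · rw [Submodule.span_le, Set.singleton_subset_iff]
          refine ⟨Pi.single j₁ (w j₁)⁻¹, ?_⟩
          rw [Matrix.toLin'_apply, hmulVec]
          rw [Finset.sum_eq_single j₁]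
          · rw [Pi.single_eq_same, mul_inv_cancel₀ hwne, one_smul]
          · intro k _ hk
            rw [Pi.single_eq_of_ne hk, mul_zero]
          · simp
      rw [hrange]
      exact finrank_span_singleton (fun hc => hγne (congrFun hc i₁))
  exact hq.2 (h : GL (Fin n) ℂ) h.2 hrefl hfixq

end Springer4


theorem stmt_2 [NeZero n] (G : Subgroup (GL (Fin n) ℂ)) (hG : IsReflectionGroup G)
    (d : Fin n → ℕ) (hd : Antitone d)
    (x : Fin n → MvPolynomial (Fin n) ℂ) (hx : BasicInvariants G d x)
    (ζ : ℂ) (m : ℕ) (hm : 0 < m) (hζ : ζ ^ m = 1)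
    (g : GL (Fin n) ℂ) (hg : IsZetaRegular G g ζ) :
    (Matrix.charpoly g.val).roots =
      Multiset.map (fun α => ζ ^ (1 - (d α : ℤ))) Finset.univ.val ∧
    ∃ α : Fin n, ζ ^ d α = 1 := by
  classical
  have hGfin : Finite ↥G := hG.1
  haveI : Fintype ↥G := Fintype.ofFinite ↥G
  obtain ⟨hgG, q, hqreg, heig⟩ := hg
  have hζ0 : ζ ≠ 0 := by
    intro hc
    rw [hc, zero_pow hm.ne'] at hζ
    exact zero_ne_one hζ
  -- the gradient matrix at q
  set Y : Matrix (Fin n) (Fin n) ℂ := Matrix.of fun α j => eval q (pderiv j (x α)) with hYdef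
  have hdetY : Y.det ≠ 0 := by
    have hJ := jac_ne_zero_at_regular G d x hx q hqreg
    rw [eval_jacPoly] at hJ
    exact hJ
  set c : Fin n → ℂ := fun α => ζ ^ (1 - (d α : ℤ)) with hcdef
  have hcz : ∀ α, c α = (ζ ^ (d α - 1))⁻¹ := by
    intro α
    show ζ ^ ((1:ℤ) - (d α : ℤ)) = (ζ ^ (d α - 1))⁻¹
    rw [show (1 : ℤ) - (d α : ℤ) = -(((d α - 1 : ℕ) : ℤ)) by
      have := hx.pos α
      push_cast [Nat.cast_sub (by omega : 1 ≤ d α)]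
      ring]
    rw [_root_.zpow_neg, zpow_natCast]
  -- eigen relation for the rows of Y
  have hrel : ∀ α j, ζ ^ (d α - 1) * (Y * g.val) α j = Y α j := by
    intro α j
    have hinv := hx.invariant g hgG α
    have h1 : eval q (pderiv j (pback (g : GL (Fin n) ℂ).val (x α))) = Y α j := by
      rw [hinv]; rfl
    rw [pderiv_pback, map_sum] at h1
    have h2 : ∀ i, eval q (C ((g : GL (Fin n) ℂ).val i j) * pback (g : GL (Fin n) ℂ).val (pderiv i (x α)))
        = (g : GL (Fin n) ℂ).val i j * (ζ ^ (d α - 1) * Y α i) := by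
      intro i
      rw [_root_.map_mul, eval_C, eval_pback, heig,
        eval_smul_of_isHomogeneous (isHomogeneous_pderiv (hx.homog α) i) ζ q]
      rfl
    rw [Finset.sum_congr rfl (fun i _ => h2 i)] at h1
    rw [← h1, Matrix.mul_apply, Finset.mul_sum]
    apply Finset.sum_congr rfl
    intro i _
    ring
  set D : Matrix (Fin n) (Fin n) ℂ := Matrix.diagonal c with hDdef
  have hYg : Y * g.val = D * Y := by
    ext α j
    rw [hDdef, Matrix.diagonal_mul]
    have := hrel α j
    rw [hcz α]
    field_simp
    rw [mul_comm]
    exact this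
  -- characteristic polynomials
  set Yc : Matrix (Fin n) (Fin n) (Polynomial ℂ) := Y.map (Polynomial.C : ℂ →+* Polynomial ℂ) with hYcdef
  have hdetYc : Yc.det = Polynomial.C Y.det := by
    rw [hYcdef, ← RingHom.mapMatrix_apply, ← RingHom.map_det]
  have hconj : Yc * charmatrix g.val = charmatrix D * Yc := by
    rw [charmatrix, charmatrix, Matrix.mul_sub, Matrix.sub_mul]
    congr 1
    · have hs : (Matrix.scalar (Fin n)) (Polynomial.X : Polynomial ℂ)
          = (Polynomial.X : Polynomial ℂ) • (1 : Matrix (Fin n) (Fin n) (Polynomial ℂ)) := by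
        rw [Matrix.scalar_apply, Matrix.smul_one_eq_diagonal]
      rw [hs, Matrix.mul_smul, Matrix.smul_mul, mul_one, one_mul]
    · show Yc * (RingHom.mapMatrix (Polynomial.C : ℂ →+* Polynomial ℂ)) g.val = _
      rw [RingHom.mapMatrix_apply, RingHom.mapMatrix_apply, hYcdef,
        ← Matrix.map_mul, hYg, Matrix.map_mul]
  have hchar : Matrix.charpoly g.val = (charmatrix D).det := by
    have hdet := congrArg Matrix.det hconj
    rw [Matrix.det_mul, Matrix.det_mul] at hdet
    rw [mul_comm ((charmatrix D).det) _] at hdet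
    have hYcne : Yc.det ≠ 0 := by
      rw [hdetYc]
      exact fun hcon => hdetY (by simpa using (Polynomial.C_eq_zero.mp hcon))
    exact mul_left_cancel₀ hYcne hdet
  have hcharD : charmatrix D
      = Matrix.diagonal (fun α => (Polynomial.X : Polynomial ℂ) - Polynomial.C (c α)) := by
    refine Matrix.ext fun i j => ?_
    by_cases hij : i = j
    · subst hij
      rw [charmatrix_apply_eq, hDdef, Matrix.diagonal_apply_eq, Matrix.diagonal_apply_eq]
    · rw [charmatrix_apply_ne _ _ _ hij, hDdef, Matrix.diagonal_apply_ne _ hij,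
        Matrix.diagonal_apply_ne _ hij]
      simp
  have hroots : (Matrix.charpoly g.val).roots = Multiset.map c Finset.univ.val := by
    rw [hchar, hcharD, Matrix.det_diagonal]
    rw [Finset.prod_eq_multiset_prod]
    rw [show Multiset.map (fun α => (Polynomial.X : Polynomial ℂ) - Polynomial.C (c α)) Finset.univ.val
        = Multiset.map (fun a => (Polynomial.X : Polynomial ℂ) - Polynomial.C a)
            (Multiset.map c Finset.univ.val) by rw [Multiset.map_map]; rfl]
    rw [Polynomial.roots_multiset_prod_X_sub_C]
  refine ⟨hroots, ?_⟩
  -- second part : ζ is one of the eigenvalues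
  set wv : Fin n → ℂ := Y *ᵥ q with hwvdef
  have hwvne : wv ≠ 0 := by
    intro hc
    apply hdetY
    exact Matrix.exists_mulVec_eq_zero_iff.mp ⟨q, hqreg.1, hc⟩
  have hDwv : D *ᵥ wv = ζ • wv := by
    rw [hwvdef, Matrix.mulVec_mulVec, ← hYg, ← Matrix.mulVec_mulVec, heig, Matrix.mulVec_smul]
  obtain ⟨α, hα⟩ := Function.ne_iff.mp hwvne
  have hcomp : c α * wv α = ζ * wv α := by
    have h1 := congrFun hDwv α
    rw [hDdef, Matrix.mulVec_diagonal] at h1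
    rw [h1]; rfl
  have hcα : c α = ζ := by
    have : wv α ≠ 0 := hα
    exact mul_right_cancel₀ this hcomp
  refine ⟨α, ?_⟩
  have h2 : ζ ^ ((d α : ℤ)) * (ζ ^ ((1:ℤ) - (d α : ℤ))) = ζ := by
    rw [← zpow_add₀ hζ0]
    rw [show (d α : ℤ) + (1 - (d α : ℤ)) = 1 by ring]
    exact zpow_one ζ
  rw [← show (c α : ℂ) = ζ ^ ((1:ℤ) - (d α : ℤ)) from rfl, hcα] at h2
  have h3 : ζ ^ ((d α : ℤ)) * ζ = 1 * ζ := by rw [h2, one_mul]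
  have h4 : ζ ^ ((d α : ℤ)) = 1 := mul_right_cancel₀ hζ0 h3
  rw [zpow_natCast] at h4
  exact h4

end
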